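/- arXiv:2605.14931 — 2 statements merged into one kernel-verified Lean document; each statement's English description precedes it below -/
import Mathlib

section
/- Let f : M → ℝ be a smooth function on a Riemannian manifold of dimension n whose Hessian satisfies the refined Kato inequality |∇|∇f||² ≤ ((n-1)/n)|∇²f|² at points where ∇f ≠ 0 (which holds whenever Δf = 0). In particular, for harmonic f, |∇|∇f||² ≤ ((n-1)/n)|∇²f|² pointwise where ∇f ≠ 0. -/
variable {n : ℕ}

/-- Second partial derivative (Hessian entry) of `f` at `x` in coordinate directions `i, j`. -/
noncomputable def hess (f : EuclideanSpace ℝ (Fin n) → ℝ)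
    (x : EuclideanSpace ℝ (Fin n)) (i j : Fin n) : ℝ :=
  fderiv ℝ (fun y => fderiv ℝ f y (EuclideanSpace.single j 1)) x (EuclideanSpace.single i 1)

open scoped RealInnerProductSpace

/-- The purely combinatorial core: a symmetric trace-free matrix satisfies the refined Kato
column estimate. -/
lemma kato_matrix {n : ℕ} (M : Fin n → Fin n → ℝ) (hsym : ∀ i j, M i j = M j i)
    (htr : ∑ i, M i i = 0) (k : Fin n) :
    ∑ i, (M i k) ^ 2 ≤ ((n : ℝ) - 1) / n * ∑ i, ∑ j, (M i j) ^ 2 := by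
  classical
  have hn : 0 < n := k.pos
  have hn1 : (1 : ℝ) ≤ n := by exact_mod_cast hn
  set D := ∑ i ∈ Finset.univ.erase k, (M i i) ^ 2 with hDdef
  set S := ∑ i ∈ Finset.univ.erase k, (M i k) ^ 2 with hSdef
  have hD : 0 ≤ D := Finset.sum_nonneg fun _ _ => sq_nonneg _
  have hS : 0 ≤ S := Finset.sum_nonneg fun _ _ => sq_nonneg _
  have hL : ∑ i, (M i k) ^ 2 = (M k k) ^ 2 + S :=
    (Finset.add_sum_erase _ _ (Finset.mem_univ k)).symm
  have htr' : M k k = -∑ i ∈ Finset.univ.erase k, M i i := by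
    have h := Finset.add_sum_erase Finset.univ (fun i => M i i) (Finset.mem_univ k)
    rw [htr] at h
    linarith
  have hCS : (M k k) ^ 2 ≤ ((n : ℝ) - 1) * D := by
    have h1 := sq_sum_le_card_mul_sum_sq (s := Finset.univ.erase k)
      (f := fun i => M i i)
    have hcard : ((Finset.univ.erase k).card : ℝ) = (n : ℝ) - 1 := by
      rw [Finset.card_erase_of_mem (Finset.mem_univ k)]
      simp only [Finset.card_univ, Fintype.card_fin]
      push_cast [Nat.cast_sub hn]
      ring
    rw [htr', neg_sq]
    calc (∑ i ∈ Finset.univ.erase k, M i i) ^ 2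
        ≤ ((Finset.univ.erase k).card : ℝ) * D := by exact_mod_cast h1
      _ = ((n : ℝ) - 1) * D := by rw [hcard]
  have hDle : D ≤ ∑ i ∈ Finset.univ.erase k, ∑ j ∈ Finset.univ.erase k, (M i j) ^ 2 :=
    Finset.sum_le_sum fun i hi => Finset.single_le_sum (f := fun j => (M i j) ^ 2) (fun j _ => sq_nonneg _) hi
  have expand : ((M k k) ^ 2 + S) + (S + ∑ i ∈ Finset.univ.erase k,
      ∑ j ∈ Finset.univ.erase k, (M i j) ^ 2) = ∑ i, ∑ j, (M i j) ^ 2 := by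
    have h1 : ∀ i : Fin n, ∑ j, (M i j) ^ 2
        = (M i k) ^ 2 + ∑ j ∈ Finset.univ.erase k, (M i j) ^ 2 := fun i =>
      (Finset.add_sum_erase _ _ (Finset.mem_univ k)).symm
    have hSk : ∑ j ∈ Finset.univ.erase k, (M k j) ^ 2 = S :=
      Finset.sum_congr rfl fun j _ => by rw [hsym]
    calc ((M k k) ^ 2 + S) + (S + ∑ i ∈ Finset.univ.erase k,
          ∑ j ∈ Finset.univ.erase k, (M i j) ^ 2)
        = (∑ i, (M i k) ^ 2) + ((∑ j ∈ Finset.univ.erase k, (M k j) ^ 2)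
            + ∑ i ∈ Finset.univ.erase k, ∑ j ∈ Finset.univ.erase k, (M i j) ^ 2) := by
          rw [hL, hSk]
      _ = (∑ i, (M i k) ^ 2) + ∑ i, ∑ j ∈ Finset.univ.erase k, (M i j) ^ 2 := by
          rw [Finset.add_sum_erase _ (fun i => ∑ j ∈ Finset.univ.erase k, (M i j) ^ 2)
            (Finset.mem_univ k)]
      _ = ∑ i, ∑ j, (M i j) ^ 2 := by
          rw [← Finset.sum_add_distrib]
          exact Finset.sum_congr rfl fun i _ => (h1 i).symm
  have htot : (M k k) ^ 2 + 2 * S + D ≤ ∑ i, ∑ j, (M i j) ^ 2 := by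
    rw [← expand]
    linarith [hDle]
  have h2 : 0 ≤ ((n : ℝ) - 2) * S := by
    rcases le_or_gt 2 n with h | h
    · have : (2 : ℝ) ≤ n := by exact_mod_cast h
      exact mul_nonneg (by linarith) hS
    · have hn1' : n = 1 := by omega
      subst hn1'
      have : Finset.univ.erase k = (∅ : Finset (Fin 1)) := by
        ext j; simp [Subsingleton.elim j k]
      rw [hSdef, this]
      simp
  rw [hL, div_mul_eq_mul_div, le_div_iff₀ (by exact_mod_cast hn : (0 : ℝ) < n)]
  have key : ((n : ℝ) - 1) * ((M k k) ^ 2 + 2 * S + D)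
      ≤ ((n : ℝ) - 1) * ∑ i, ∑ j, (M i j) ^ 2 :=
    mul_le_mul_of_nonneg_left htot (by linarith)
  nlinarith [key, hCS, h2, hS, hD]

/-- Refined Kato estimate for a symmetric trace-free operator on Euclidean space. -/
lemma kato_alg {n : ℕ} (A : EuclideanSpace ℝ (Fin n) →L[ℝ] EuclideanSpace ℝ (Fin n))
    (hsym : ∀ a b, ⟪A a, b⟫ = ⟪A b, a⟫)
    (htr : ∑ i, ⟪A (EuclideanSpace.single i 1), EuclideanSpace.single i 1⟫ = 0)
    {u : EuclideanSpace ℝ (Fin n)} (hu : ‖u‖ = 1) :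
    ‖A u‖ ^ 2 ≤ ((n : ℝ) - 1) / n *
      ∑ i, ∑ j, ⟪A (EuclideanSpace.single i 1), EuclideanSpace.single j 1⟫ ^ 2 := by
  classical
  have hn : 0 < n := by
    rcases Nat.eq_zero_or_pos n with h | h
    · subst h
      have : u = 0 := Subsingleton.elim u 0
      rw [this] at hu
      simp at hu
    · exact h
  set k : Fin n := ⟨0, hn⟩
  have hON : Orthonormal ℝ (({k} : Set (Fin n)).restrict
      (fun _ : Fin n => u)) := by
    rw [orthonormal_iff_ite]
    intro i j
    have hij : i = j := Subsingleton.elim i j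
    subst hij
    rw [if_pos rfl]
    show ⟪u, u⟫ = 1
    rw [real_inner_self_eq_norm_sq, hu]; norm_num
  obtain ⟨b, hb⟩ := hON.exists_orthonormalBasis_extension_of_card_eq
    (by simp [finrank_euclideanSpace]) 
  have hbk : b k = u := hb k rfl
  set e := EuclideanSpace.basisFun (Fin n) ℝ with he
  have heap : ∀ i, e i = EuclideanSpace.single i 1 := fun i => EuclideanSpace.basisFun_apply (Fin n) ℝ i
  have parseval : ∀ (c : OrthonormalBasis (Fin n) ℝ (EuclideanSpace ℝ (Fin n)))
      (z : EuclideanSpace ℝ (Fin n)), ‖z‖ ^ 2 = ∑ i, ⟪c i, z⟫ ^ 2 := by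
    intro c z
    have h := c.sum_inner_mul_inner z z
    rw [real_inner_self_eq_norm_sq] at h
    rw [← h]
    exact Finset.sum_congr rfl fun i _ => by rw [real_inner_comm]; ring
  have comm : ∀ p q : EuclideanSpace ℝ (Fin n), ⟪p, q⟫ = ⟪q, p⟫ :=
    fun p q => real_inner_comm q p
  set M : Fin n → Fin n → ℝ := fun i j => ⟪b i, A (b j)⟫ with hM
  have hMsym : ∀ i j, M i j = M j i := by
    intro i j
    simp only [hM]
    rw [comm (b i), hsym, comm (A (b i))]
  have htrM : ∑ i, M i i = 0 := by
    have h1 : ∀ i, M i i = ∑ j, ⟪b i, e j⟫ * ⟪e j, A (b i)⟫ := fun i =>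
      (e.sum_inner_mul_inner _ _).symm
    calc ∑ i, M i i = ∑ i, ∑ j, ⟪b i, e j⟫ * ⟪e j, A (b i)⟫ :=
          Finset.sum_congr rfl fun i _ => h1 i
      _ = ∑ j, ∑ i, ⟪A (e j), b i⟫ * ⟪b i, e j⟫ := by
          rw [Finset.sum_comm]
          refine Finset.sum_congr rfl fun j _ => Finset.sum_congr rfl fun i _ => ?_
          rw [comm (e j) (A (b i)), hsym, mul_comm]
      _ = ∑ j, ⟪A (e j), e j⟫ :=
          Finset.sum_congr rfl fun j _ => b.sum_inner_mul_inner (A (e j)) (e j)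
      _ = 0 := by simp only [heap]; exact htr
  have hF : ∑ i, ∑ j, (M i j) ^ 2
      = ∑ i, ∑ j, ⟪A (EuclideanSpace.single i 1), EuclideanSpace.single j 1⟫ ^ 2 := by
    calc ∑ i, ∑ j, (M i j) ^ 2 = ∑ j, ∑ i, ⟪b i, A (b j)⟫ ^ 2 := Finset.sum_comm
      _ = ∑ j, ‖A (b j)‖ ^ 2 := Finset.sum_congr rfl fun j _ => (parseval b (A (b j))).symm
      _ = ∑ j, ∑ i, ⟪e i, A (b j)⟫ ^ 2 := Finset.sum_congr rfl fun j _ => parseval e (A (b j))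
      _ = ∑ i, ∑ j, ⟪b j, A (e i)⟫ ^ 2 := by
          rw [Finset.sum_comm]
          refine Finset.sum_congr rfl fun i _ => Finset.sum_congr rfl fun j _ => ?_
          rw [comm (e i) (A (b j)), hsym, comm (A (e i)) (b j)]
      _ = ∑ i, ‖A (e i)‖ ^ 2 := Finset.sum_congr rfl fun i _ => (parseval b (A (e i))).symm
      _ = ∑ i, ∑ j, ⟪e j, A (e i)⟫ ^ 2 := Finset.sum_congr rfl fun i _ => parseval e (A (e i))
      _ = ∑ i, ∑ j, ⟪A (EuclideanSpace.single i 1), EuclideanSpace.single j 1⟫ ^ 2 := by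
          refine Finset.sum_congr rfl fun i _ => Finset.sum_congr rfl fun j _ => ?_
          rw [comm (e j) (A (e i)), heap i, heap j]
  have hAu : ‖A u‖ ^ 2 = ∑ i, (M i k) ^ 2 := by
    rw [parseval b (A u), ← hbk]
  rw [hAu, ← hF]
  exact kato_matrix M hMsym htrM k

/-- Refined Kato inequality: for a smooth harmonic function `f` on `n`-dimensional
Euclidean space, at points where `∇f ≠ 0`,
`|∇|∇f||² ≤ ((n-1)/n) |∇²f|²` (with the Frobenius norm of the Hessian). -/
theorem stmt_7 (f : EuclideanSpace ℝ (Fin n) → ℝ) (hf : ContDiff ℝ (⊤ : ℕ∞) f)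
    (hharm : ∀ x, ∑ i, hess f x i i = 0)
    (x : EuclideanSpace ℝ (Fin n)) (hx : gradient f x ≠ 0) :
    ‖gradient (fun y => ‖gradient f y‖) x‖ ^ 2 ≤
      (((n : ℝ) - 1) / n) * ∑ i, ∑ j, (hess f x i j) ^ 2 := by
  classical
  have hdiff : Differentiable ℝ f := hf.differentiable (by simp)
  have hf' : ∀ y, HasFDerivAt f (fderiv ℝ f y) y := fun y => (hdiff y).hasFDerivAt
  have hcd : ContDiff ℝ 1 (fderiv ℝ f) := hf.fderiv_right (WithTop.coe_le_coe.2 le_top)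
  set B := fderiv ℝ (fderiv ℝ f) x with hBdef
  have hB : HasFDerivAt (fderiv ℝ f) B x := ((hcd.differentiable one_ne_zero) x).hasFDerivAt
  have hBsym : ∀ v w, B v w = B w v := second_derivative_symmetric hf' hB
  let L₀ : (EuclideanSpace ℝ (Fin n) →L[ℝ] ℝ) →ₗ[ℝ] EuclideanSpace ℝ (Fin n) :=
    { toFun := fun φ => ∑ i, φ (EuclideanSpace.single i 1) • EuclideanSpace.single i 1
      map_add' := by
        intro φ ψ
        simp [add_smul, Finset.sum_add_distrib]
      map_smul' := by
        intro c φ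
        simp [smul_smul, Finset.smul_sum] }
  set L : (EuclideanSpace ℝ (Fin n) →L[ℝ] ℝ) →L[ℝ] EuclideanSpace ℝ (Fin n) :=
    L₀.toContinuousLinearMap with hL
  have hLinner : ∀ (φ : EuclideanSpace ℝ (Fin n) →L[ℝ] ℝ) (w : EuclideanSpace ℝ (Fin n)),
      ⟪L φ, w⟫ = φ w := by
    intro φ w
    have hLapp : L φ = ∑ i, φ (EuclideanSpace.single i 1) • EuclideanSpace.single i 1 := rfl
    have hrepr := (EuclideanSpace.basisFun (Fin n) ℝ).sum_repr' w
    conv_rhs => rw [← hrepr]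
    rw [hLapp, sum_inner, map_sum]
    refine Finset.sum_congr rfl fun i _ => ?_
    rw [real_inner_smul_left, map_smul]
    simp [EuclideanSpace.basisFun_apply (Fin n) ℝ i, real_inner_comm, smul_eq_mul, mul_comm]
  set A := L.comp B with hA
  have hAinner : ∀ h w, ⟪A h, w⟫ = B h w := fun h w => hLinner (B h) w
  have hG : HasFDerivAt (fun y => gradient f y) A x := by
    have hfun : (fun y => gradient f y) = ⇑L ∘ fderiv ℝ f := by
      funext y
      refine ext_inner_right ℝ fun w => ?_
      rw [Function.comp_apply, hLinner]
      exact InnerProductSpace.toDual_symm_apply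
    rw [hfun]
    exact L.hasFDerivAt.comp x hB
  have hhess : ∀ i j, hess f x i j
      = B (EuclideanSpace.single i 1) (EuclideanSpace.single j 1) := by
    intro i j
    have h1 := (ContinuousLinearMap.apply ℝ ℝ (EuclideanSpace.single j 1)).hasFDerivAt.comp x hB
    have h2 : (fun y => fderiv ℝ f y (EuclideanSpace.single j 1))
        = ⇑(ContinuousLinearMap.apply ℝ ℝ (EuclideanSpace.single j 1)) ∘ fderiv ℝ f := rfl
    unfold hess
    rw [h2, h1.fderiv]
    rfl
  set v := gradient f x with hv
  have hvnorm : (0 : ℝ) < ‖v‖ := norm_pos_iff.2 hx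
  have hq : HasFDerivAt (fun y => ⟪gradient f y, gradient f y⟫)
      ((fderivInnerCLM ℝ (v, v)).comp (A.prod A)) x := hG.inner ℝ hG
  have hne : ⟪v, v⟫ ≠ 0 := by
    rw [real_inner_self_eq_norm_sq]; positivity
  have hs : HasDerivAt Real.sqrt (1 / (2 * Real.sqrt ⟪v, v⟫)) ⟪v, v⟫ :=
    Real.hasDerivAt_sqrt hne
  have hcomp : HasFDerivAt (fun y => Real.sqrt ⟪gradient f y, gradient f y⟫)
      ((1 / (2 * Real.sqrt ⟪v, v⟫)) • ((fderivInnerCLM ℝ (v, v)).comp (A.prod A))) x :=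
    hs.comp_hasFDerivAt x hq
  have hgfun : (fun y => ‖gradient f y‖)
      = fun y => Real.sqrt ⟪gradient f y, gradient f y⟫ := by
    funext y
    rw [real_inner_self_eq_norm_sq, Real.sqrt_sq (norm_nonneg _)]
  set w := ‖v‖⁻¹ • (A v) with hw
  have hAv : ∀ h, ⟪v, A h⟫ = ⟪A v, h⟫ := by
    intro h
    rw [real_inner_comm, hAinner, hBsym, ← hAinner]
  have hCLM : ((1 / (2 * Real.sqrt ⟪v, v⟫)) • ((fderivInnerCLM ℝ (v, v)).comp (A.prod A)))
      = InnerProductSpace.toDual ℝ (EuclideanSpace ℝ (Fin n)) w := by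
    ext h
    simp only [ContinuousLinearMap.coe_smul', Pi.smul_apply,
      ContinuousLinearMap.comp_apply, ContinuousLinearMap.prod_apply,
      fderivInnerCLM_apply, InnerProductSpace.toDual_apply_apply, smul_eq_mul, hw]
    have hAv2 : ⟪A h, v⟫ = ⟪A v, h⟫ := (real_inner_comm (A h) v).symm.trans (hAv h)
    rw [real_inner_smul_left, hAv h, hAv2,
      real_inner_self_eq_norm_sq, Real.sqrt_sq (norm_nonneg v)]
    field_simp
    ring
  have hgrad2 : HasGradientAt (fun y => ‖gradient f y‖) w x := by
    rw [hgfun]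
    show HasFDerivAt _ ((InnerProductSpace.toDual ℝ (EuclideanSpace ℝ (Fin n))) w) x
    rw [← hCLM]
    exact hcomp
  rw [hgrad2.gradient]
  set u := ‖v‖⁻¹ • v with hu'
  have hu : ‖u‖ = 1 := norm_smul_inv_norm hx
  have hwAu : A u = w := by rw [hu', map_smul, hw]
  have hsymA : ∀ a b, ⟪A a, b⟫ = ⟪A b, a⟫ := by
    intro a b
    rw [hAinner, hAinner, hBsym]
  have htrA : ∑ i, ⟪A (EuclideanSpace.single i 1), EuclideanSpace.single i 1⟫ = 0 := by
    have h := hharm x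
    simp only [hhess] at h
    simpa only [hAinner] using h
  have hkey := kato_alg A hsymA htrA hu
  rw [hwAu] at hkey
  calc ‖w‖ ^ 2 ≤ ((n : ℝ) - 1) / n *
        ∑ i, ∑ j, ⟪A (EuclideanSpace.single i 1), EuclideanSpace.single j 1⟫ ^ 2 := hkey
    _ = (((n : ℝ) - 1) / n) * ∑ i, ∑ j, (hess f x i j) ^ 2 := by
        congr 1
        refine Finset.sum_congr rfl fun i _ => Finset.sum_congr rfl fun j _ => ?_
        rw [hAinner, ← hhess]
end

section
/- Let b : M → ℝ be smooth and harmonic with |∇b|² = u^{2α} for a smooth positive function u on an n-dimensional Riemannian manifold satisfying α u^{2α−1} Δu ≤ Ric(∇b,∇b) pointwise... combined with the Bochner formula (1/2)Δ|∇b|² = |∇²b|² + Ric(∇b,∇b), one deduces |∇²b|² ≤ ((2α−1)/α)|∇ u^α|² = ((2α−1)/α)|∇|∇b||². -/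
variable {n : ℕ}

/-- Laplacian of `f` at `x`: trace of the Hessian. -/
noncomputable def lap (f : EuclideanSpace ℝ (Fin n) → ℝ)
    (x : EuclideanSpace ℝ (Fin n)) : ℝ :=
  ∑ i, hess f x i i

/-- Squared Frobenius norm of the Hessian of `f` at `x`. -/
noncomputable def hessNormSq (f : EuclideanSpace ℝ (Fin n) → ℝ)
    (x : EuclideanSpace ℝ (Fin n)) : ℝ :=
  ∑ i, ∑ j, (hess f x i j) ^ 2

lemma grad_normSq (f : EuclideanSpace ℝ (Fin n) → ℝ) (x : EuclideanSpace ℝ (Fin n)) :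
    ‖gradient f x‖ ^ 2 = ∑ i, (fderiv ℝ f x (EuclideanSpace.single i 1)) ^ 2 := by
  have h : ∀ i : Fin n, fderiv ℝ f x (EuclideanSpace.single i 1) = gradient f x i := by
    intro i
    have h1 : inner (𝕜 := ℝ) (gradient f x) (EuclideanSpace.single i (1:ℝ))
        = fderiv ℝ f x (EuclideanSpace.single i 1) := by
      simp [gradient, InnerProductSpace.toDual_symm_apply]
    rw [← h1, EuclideanSpace.inner_single_right]
    simp
  simp_rw [h]
  rw [EuclideanSpace.norm_eq, Real.sq_sqrt (by positivity)]
  simp [sq_abs]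

lemma hess_rpow (u : EuclideanSpace ℝ (Fin n) → ℝ) (hu : ContDiff ℝ (⊤ : ℕ∞) u)
    (hupos : ∀ x, 0 < u x) (β : ℝ) (x : EuclideanSpace ℝ (Fin n)) (i j : Fin n) :
    hess (fun y => u y ^ β) x i j
      = β * (β - 1) * u x ^ (β - 2) * (fderiv ℝ u x (EuclideanSpace.single i 1))
          * (fderiv ℝ u x (EuclideanSpace.single j 1))
        + β * u x ^ (β - 1) * hess u x i j := by
  have hud : ∀ y, HasFDerivAt u (fderiv ℝ u y) y :=
    fun y => (hu.differentiable (by simp) y).hasFDerivAt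
  have key : (fun y => fderiv ℝ (fun z => u z ^ β) y (EuclideanSpace.single j 1))
      = fun y => (β * u y ^ (β - 1)) * fderiv ℝ u y (EuclideanSpace.single j 1) := by
    funext y
    rw [((hud y).rpow_const (Or.inl (hupos y).ne')).fderiv]
    simp
  have hdj : DifferentiableAt ℝ (fun y => fderiv ℝ u y (EuclideanSpace.single j 1)) x := by
    have hfd : ContDiff ℝ (⊤ : ℕ∞) (fun y => fderiv ℝ u y) := hu.fderiv_right (by simp)
    exact ((hfd.clm_apply contDiff_const).differentiable (by simp)).differentiableAt
  have hc : HasFDerivAt (fun y => β * u y ^ (β - 1))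
      (β • (((β - 1) * u x ^ (β - 1 - 1)) • fderiv ℝ u x)) x :=
    ((hud x).rpow_const (Or.inl (hupos x).ne')).const_mul β
  have hmul : fderiv ℝ (fun y => β * u y ^ (β - 1) * fderiv ℝ u y (EuclideanSpace.single j 1)) x = _ :=
    (hc.mul hdj.hasFDerivAt).fderiv
  show fderiv ℝ (fun y => fderiv ℝ (fun z => u z ^ β) y (EuclideanSpace.single j 1)) x
      (EuclideanSpace.single i 1) = _
  rw [key, hmul]
  have h2 : β - 1 - 1 = β - 2 := by ring
  simp only [ContinuousLinearMap.add_apply, ContinuousLinearMap.smul_apply, smul_eq_mul, h2]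
  show _ = _ + β * u x ^ (β - 1) *
    fderiv ℝ (fun y => fderiv ℝ u y (EuclideanSpace.single j 1)) x (EuclideanSpace.single i 1)
  ring

lemma lap_rpow (u : EuclideanSpace ℝ (Fin n) → ℝ) (hu : ContDiff ℝ (⊤ : ℕ∞) u)
    (hupos : ∀ x, 0 < u x) (β : ℝ) (x : EuclideanSpace ℝ (Fin n)) :
    lap (fun y => u y ^ β) x
      = β * (β - 1) * u x ^ (β - 2) * (∑ i, (fderiv ℝ u x (EuclideanSpace.single i 1)) ^ 2)
        + β * u x ^ (β - 1) * lap u x := by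
  unfold lap
  simp_rw [hess_rpow u hu hupos β x]
  rw [Finset.sum_add_distrib, Finset.mul_sum, Finset.mul_sum]
  congr 1
  exact Finset.sum_congr rfl fun i _ => by ring

/-- If `b` is smooth harmonic with `|∇b|² = u^{2α}`, `Ric` denotes the value
`Ric(∇b,∇b)` and satisfies `α u^{2α−1} Δu ≤ Ric(∇b,∇b)`, then combining with the
Bochner formula `(1/2)Δ|∇b|² = |∇²b|² + Ric(∇b,∇b)` yields
`|∇²b|² ≤ ((2α−1)/α)|∇u^α|² = ((2α−1)/α)|∇|∇b||²`. -/
theorem stmt_9 (b u : EuclideanSpace ℝ (Fin n) → ℝ)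
    (Ric : EuclideanSpace ℝ (Fin n) → ℝ)
    (hb : ContDiff ℝ (⊤ : ℕ∞) b) (hu : ContDiff ℝ (⊤ : ℕ∞) u) (hupos : ∀ x, 0 < u x)
    (α : ℝ) (hα : 0 < α)
    (hharm : ∀ x, lap b x = 0)
    (hgrad : ∀ x, ‖gradient b x‖ ^ 2 = u x ^ (2 * α))
    (hspec : ∀ x, α * u x ^ (2 * α - 1) * lap u x ≤ Ric x)
    (hBochner : ∀ x, (1 / 2) * lap (fun y => ‖gradient b y‖ ^ 2) x
      = hessNormSq b x + Ric x) :
    ∀ x, hessNormSq b x ≤ ((2 * α - 1) / α) * ‖gradient (fun y => u y ^ α) x‖ ^ 2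
      ∧ ‖gradient (fun y => u y ^ α) x‖ ^ 2
          = ‖gradient (fun y => ‖gradient b y‖) x‖ ^ 2 := by
  have hfun3 : (fun y => u y ^ α) = (fun y => ‖gradient b y‖) := by
    funext y
    have h2 : ‖gradient b y‖ ^ 2 = (u y ^ α) ^ 2 := by
      rw [hgrad y, ← Real.rpow_natCast (u y ^ α) 2, ← Real.rpow_mul (hupos y).le]
      norm_num [mul_comm]
    rw [← Real.sqrt_sq (Real.rpow_nonneg (hupos y).le α), ← h2,
      Real.sqrt_sq (norm_nonneg _)]
  intro x
  set S := ∑ i, (fderiv ℝ u x (EuclideanSpace.single i 1)) ^ 2 with hS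
  have hfun2 : (fun y => ‖gradient b y‖ ^ 2) = fun y => u y ^ (2 * α) := funext hgrad
  have hB := hBochner x
  rw [hfun2, lap_rpow u hu hupos (2 * α) x, ← hS] at hB
  have hg : ‖gradient (fun y => u y ^ α) x‖ ^ 2 = α ^ 2 * u x ^ (2 * α - 2) * S := by
    rw [grad_normSq]
    have hfd : ∀ i : Fin n, fderiv ℝ (fun y => u y ^ α) x (EuclideanSpace.single i 1)
        = α * u x ^ (α - 1) * fderiv ℝ u x (EuclideanSpace.single i 1) := by
      intro i
      rw [((hu.differentiable (by simp) x).hasFDerivAt.rpow_const (Or.inl (hupos x).ne')).fderiv]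
      simp
    simp_rw [hfd]
    have hpw : (u x ^ (α - 1)) ^ 2 = u x ^ (2 * α - 2) := by
      rw [← Real.rpow_natCast (u x ^ (α - 1)) 2, ← Real.rpow_mul (hupos x).le]
      norm_num; ring_nf
    rw [hS, Finset.mul_sum]
    refine Finset.sum_congr rfl fun i _ => ?_
    rw [show α ^ 2 * u x ^ (2*α-2) * (fderiv ℝ u x (EuclideanSpace.single i 1))^2
      = α ^ 2 * (u x ^ (α-1))^2 * (fderiv ℝ u x (EuclideanSpace.single i 1))^2 by rw [hpw]]
    ring
  constructor
  · rw [hg]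
    have hrw : (2 * α - 1) / α * (α ^ 2 * u x ^ (2 * α - 2) * S)
        = α * (2 * α - 1) * u x ^ (2 * α - 2) * S := by
      field_simp
    rw [hrw]
    unfold hessNormSq at hB ⊢
    nlinarith [hspec x, hB]
  · rw [hfun3]
end
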